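/- arXiv:2506.21286 — 4 statements merged into one kernel-verified Lean document; each statement's English description precedes it below -/
import Mathlib

section
/- Let G be an r-regular, r-edge-colorable graph such that for every set S of r−1 edges of G, the graph obtained from G by deleting all endpoints of edges in S has the same independence number as G. Then the line hypergraph L(G) is an r-partite r-uniform hypergraph with the property that for every set T of r−1 vertices of L(G), deleting T from L(G) does not decrease the matching number; in particular L(G) is a counterexample to Lovász' conjecture. -/
/-- The independence number of a graph. -/
noncomputable def indepNum {V : Type*} (G : SimpleGraph V) : ℕ :=
  sSup {m | ∃ I : Finset V, (∀ u ∈ I, ∀ v ∈ I, ¬ G.Adj u v) ∧ I.card = m}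

/-- The independence number of the subgraph of `G` induced on the vertex set `s`. -/
noncomputable def indepNumOn {V : Type*} (G : SimpleGraph V) (s : Set V) : ℕ :=
  sSup {m | ∃ I : Finset V, ↑I ⊆ s ∧ (∀ u ∈ I, ∀ v ∈ I, ¬ G.Adj u v) ∧ I.card = m}

/-- `G` is `r`-edge-colorable. -/
def EdgeColorable {V : Type*} (G : SimpleGraph V) (r : ℕ) : Prop :=
  ∃ C : Sym2 V → Fin r, ∀ e ∈ G.edgeSet, ∀ f ∈ G.edgeSet,
    e ≠ f → (∃ v, v ∈ e ∧ v ∈ f) → C e ≠ C f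

/-- The matching number of the line hypergraph `L(G)` whose hyperedges are the
incidence sets `S(v) = G.incidenceSet v`. -/
noncomputable def lineNu {V : Type*} (G : SimpleGraph V) : ℕ :=
  sSup {m | ∃ M : Finset (Set (Sym2 V)),
    (∀ A ∈ M, ∃ v : V, A = G.incidenceSet v) ∧
    ((M : Set (Set (Sym2 V))).Pairwise fun A B => Disjoint A B) ∧ M.card = m}

/-- The matching number of the line hypergraph `L(G)` after deleting the vertex set `T`
(of `L(G)`, i.e. a set of edges of `G`): only hyperedges containing no member of `T`
survive. -/
noncomputable def lineNuDel {V : Type*} (G : SimpleGraph V) (T : Set (Sym2 V)) : ℕ :=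
  sSup {m | ∃ M : Finset (Set (Sym2 V)),
    (∀ A ∈ M, ∃ v : V, A = G.incidenceSet v ∧ ∀ e ∈ T, e ∉ A) ∧
    ((M : Set (Set (Sym2 V))).Pairwise fun A B => Disjoint A B) ∧ M.card = m}

/-!
Colour classes of a proper `r`-edge-colouring of an `r`-regular graph meet every star `S(v)`
in exactly one edge, so `L(G)` is `r`-partite and `r`-uniform. Disjoint stars have pairwise
non-adjacent centres, and conversely, so `ν(L(G)) = α(G)`; deleting edges `T` from `L(G)`
leaves exactly the stars centred away from the endpoints of `T`, whence
`ν(L(G) - T) ≥ α(G - V(T)) = α(G) = ν(L(G))`.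
-/

theorem Finset.bddAbove_range_card {α : Type*} [Finite α] :
    BddAbove (Set.range (Finset.card : Finset α → ℕ)) := by
  have := Fintype.ofFinite α
  exact ⟨Fintype.card α, by rintro _ ⟨s, rfl⟩; exact s.card_le_univ⟩

namespace SimpleGraph

variable {V : Type*} (G : SimpleGraph V)

def IsProperEdgeColoring {r : ℕ} (C : Sym2 V → Fin r) : Prop :=
  ∀ e ∈ G.edgeSet, ∀ f ∈ G.edgeSet, e ≠ f → (∃ v, v ∈ e ∧ v ∈ f) → C e ≠ C f

theorem ncard_incidenceSet (v : V) : (G.incidenceSet v).ncard = (G.neighborSet v).ncard := by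
  classical
  rw [← Nat.card_coe_set_eq, Nat.card_congr (G.incidenceSetEquivNeighborSet v),
    Nat.card_coe_set_eq]

variable {G} in
theorem IsProperEdgeColoring.existsUnique_mem_incidenceSet {r : ℕ} {C : Sym2 V → Fin r}
    (hC : G.IsProperEdgeColoring C) {v : V} (hv : (G.incidenceSet v).ncard = r) (c : Fin r) :
    ∃! e, e ∈ G.incidenceSet v ∧ C e = c := by
  have hinj : Set.InjOn C (G.incidenceSet v) := fun e he f hf hef =>
    by_contra fun hne => hC e he.1 f hf.1 hne ⟨v, he.2, hf.2⟩ hef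
  have hsurj : C '' G.incidenceSet v = Set.univ :=
    Set.eq_of_subset_of_ncard_le (Set.subset_univ _)
      (by rw [Set.ncard_univ, Nat.card_fin, hinj.ncard_image, hv])
  obtain ⟨e, he, rfl⟩ : c ∈ C '' G.incidenceSet v := hsurj ▸ Set.mem_univ c
  exact ⟨e, ⟨he, rfl⟩, fun f hf => hinj hf.1 he hf.2⟩

theorem eq_of_incidenceSet_eq_of_not_adj {u v : V} (hu : (G.neighborSet u).Nonempty)
    (hadj : ¬ G.Adj u v) (h : G.incidenceSet u = G.incidenceSet v) : u = v := by
  obtain ⟨w, huw⟩ := hu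
  have hv : v ∈ s(u, w) := (h ▸ G.mk'_mem_incidenceSet_left_iff.mpr huw).2
  rcases Sym2.mem_iff.mp hv with rfl | rfl
  · rfl
  · exact absurd huw hadj

end SimpleGraph

section LineHypergraph

open Finset

variable {V : Type*} (G : SimpleGraph V)

theorem exists_indep_card_eq_of_lineMatching {M : Finset (Set (Sym2 V))}
    (hM : ∀ A ∈ M, ∃ v, A = G.incidenceSet v)
    (hdisj : (M : Set (Set (Sym2 V))).Pairwise fun A B => Disjoint A B) :
    ∃ I : Finset V, (∀ u ∈ I, ∀ v ∈ I, ¬ G.Adj u v) ∧ I.card = M.card := by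
  classical
  choose center hcenter using hM
  let c : M → V := fun A => center A.1 A.2
  have hc : ∀ A : M, (A : Set (Sym2 V)) = G.incidenceSet (c A) := fun A => hcenter A.1 A.2
  have hc_inj : c.Injective := fun A B h => Subtype.ext ((hc A).trans (h ▸ (hc B).symm))
  refine ⟨M.attach.image c, ?_, by rw [card_image_of_injective _ hc_inj, card_attach]⟩
  simp only [mem_image, mem_attach, true_and, forall_exists_index, forall_apply_eq_imp_iff]
  intro A B hadj
  have hAB : A ≠ B := fun h => G.irrefl (h ▸ hadj)
  have heA : s(c A, c B) ∈ (A : Set (Sym2 V)) :=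
    hc A ▸ G.mk'_mem_incidenceSet_left_iff.mpr hadj
  have heB : s(c A, c B) ∈ (B : Set (Sym2 V)) :=
    hc B ▸ G.mk'_mem_incidenceSet_right_iff.mpr hadj
  exact Set.disjoint_left.mp (hdisj A.2 B.2 (Subtype.val_injective.ne hAB)) heA heB

theorem lineNu_le_indepNum [Finite V] : lineNu G ≤ indepNum G := by
  refine csSup_le' fun m ⟨M, hM, hdisj, hm⟩ => ?_
  obtain ⟨I, hI, hcard⟩ := exists_indep_card_eq_of_lineMatching G hM hdisj
  apply le_csSup
  · exact Finset.bddAbove_range_card.mono (by rintro _ ⟨I, -, rfl⟩; exact ⟨I, rfl⟩)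
  · exact ⟨I, hI, hcard.trans hm⟩

theorem lineNuDel_le_lineNu [Finite V] (T : Set (Sym2 V)) : lineNuDel G T ≤ lineNu G := by
  refine csSup_le_csSup'
    (Finset.bddAbove_range_card.mono (by rintro _ ⟨M, -, -, rfl⟩; exact ⟨M, rfl⟩)) ?_
  rintro m ⟨M, hM, hdisj, rfl⟩
  exact ⟨M, fun A hA => (hM A hA).imp fun _ => And.left, hdisj, rfl⟩

theorem indepNumOn_le_lineNuDel [Finite V] (T : Set (Sym2 V))
    (hdeg : ∀ v, (G.neighborSet v).Nonempty) :
    indepNumOn G {v | ∀ e ∈ T, v ∉ e} ≤ lineNuDel G T := by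
  classical
  refine csSup_le_csSup'
    (Finset.bddAbove_range_card.mono (by rintro _ ⟨M, -, -, rfl⟩; exact ⟨M, rfl⟩)) ?_
  rintro m ⟨I, hIT, hI, rfl⟩
  refine ⟨I.image G.incidenceSet, ?_, ?_, card_image_of_injOn fun u hu v hv h =>
    G.eq_of_incidenceSet_eq_of_not_adj (hdeg u) (hI u hu v hv) h⟩
  · simp only [mem_image, forall_exists_index, and_imp, forall_apply_eq_imp_iff₂]
    exact fun v hv => ⟨v, rfl, fun e he hev => hIT hv e he hev.2⟩
  · rintro _ hA _ hB hAB
    obtain ⟨u, hu, rfl⟩ := mem_image.mp hA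
    obtain ⟨v, hv, rfl⟩ := mem_image.mp hB
    exact Set.disjoint_iff_inter_eq_empty.mpr <| G.incidenceSet_inter_incidenceSet_of_not_adj
      (hI u hu v hv) fun h => hAB (h ▸ rfl)

theorem lineNuDel_empty : lineNuDel G ∅ = lineNu G := by
  simp [lineNuDel, lineNu]

end LineHypergraph

/-- If `G` is `r`-regular, `r`-edge-colorable, and for every set `S` of `r−1` edges
removing all endpoints of edges of `S` does not change the independence number, then the
line hypergraph `L(G)` is `r`-partite and `r`-uniform, and for every set `T` of `r−1`
of its vertices, deleting `T` does not decrease the matching number — so `L(G)` is a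
counterexample to Lovász' conjecture. -/
theorem lineHypergraph_counterexample_of_indepNum_stable {V : Type*} [Fintype V]
    (G : SimpleGraph V) (r : ℕ)
    (hreg : ∀ v : V, (G.neighborSet v).ncard = r)
    (hcol : EdgeColorable G r)
    (hstable : ∀ S : Finset (Sym2 V), ↑S ⊆ G.edgeSet → S.card = r - 1 →
      indepNumOn G {v : V | ∀ e ∈ S, v ∉ e} = indepNum G) :
    (∃ F : Sym2 V → Fin r, ∀ v : V, ∀ c : Fin r,
        ∃! e : Sym2 V, e ∈ G.incidenceSet v ∧ F e = c) ∧
    (∀ v : V, (G.incidenceSet v).ncard = r) ∧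
    (∀ T : Finset (Sym2 V), ↑T ⊆ G.edgeSet → T.card = r - 1 →
      lineNuDel G ↑T = lineNu G) := by
  have hunif : ∀ v, (G.incidenceSet v).ncard = r := fun v =>
    (G.ncard_incidenceSet v).trans (hreg v)
  obtain ⟨C, hC : G.IsProperEdgeColoring C⟩ := hcol
  refine ⟨⟨C, fun v => hC.existsUnique_mem_incidenceSet (hunif v)⟩,
    hunif, fun T hT hTcard => ?_⟩
  -- For `r = 0` every star is empty and `ν(L(G)) = α(G)` fails, but then only `T = ∅` occurs.
  obtain rfl | hTne := T.eq_empty_or_nonempty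
  · simpa using lineNuDel_empty G
  have hdeg : ∀ v, (G.neighborSet v).Nonempty := fun v =>
    Set.nonempty_of_ncard_ne_zero (by have := hTne.card_pos; rw [hreg v]; omega)
  refine le_antisymm (lineNuDel_le_lineNu G T) ?_
  calc lineNu G ≤ indepNum G := lineNu_le_indepNum G
    _ = indepNumOn G {v | ∀ e ∈ T, v ∉ e} := (hstable T hT hTcard).symm
    _ ≤ lineNuDel G T := indepNumOn_le_lineNuDel G T hdeg
end

section
/- For every n ≥ 5, the independence number of the generalized Petersen graph GP(n,2) equals ⌊4n/5⌋. -/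
/-- The generalized Petersen graph `GP(n,k)`: vertices `a_i = Sum.inl i` and
`b_i = Sum.inr i` for `i ∈ ℤ_n`, with edges `a_i b_i`, `a_i a_{i+1}`, `b_i b_{i+k}`. -/
def GP (n : ℕ) (k : ZMod n) : SimpleGraph (ZMod n ⊕ ZMod n) :=
  SimpleGraph.fromRel fun u v =>
    (∃ i, u = Sum.inl i ∧ v = Sum.inr i) ∨
    (∃ i, u = Sum.inl i ∧ v = Sum.inl (i + 1)) ∨
    (∃ i, u = Sum.inr i ∧ v = Sum.inr (i + k))

/-!
An independent set of `GP(n,2)` meets each spoke `{a_i, b_i}` at most once, and it cannot meet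
five consecutive spokes: starting from `a_i` or `b_i`, the rim edges `a_j a_{j+1}` and the inner
edges `b_j b_{j+2}` force the choices on the next spokes until two of them collide. Averaging
over the `n` windows of five consecutive spokes gives `5 |I| ≤ 4 n`.

Conversely, take `a_i` for `i ≡ 1, 4` and `b_i` for `i ≡ 2, 3 (mod 5)`, `0 ≤ i < n`. Because
the empty residue class `0` starts the pattern, every edge across the seam `n - 1 → 0` ends at
index `0` or `1`, so the set is independent for every `n ≥ 3`; it has
`n - ⌈n / 5⌉ = ⌊4 n / 5⌋` vertices.
-/

open Finset Sum

theorem indepNum_eq_of_isIndepSet {V : Type*} {G : SimpleGraph V} {m : ℕ}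
    (hle : ∀ I : Finset V, G.IsIndepSet ↑I → #I ≤ m)
    (hex : ∃ I : Finset V, G.IsIndepSet ↑I ∧ #I = m) : indepNum G = m := by
  have hiff (I : Finset V) : (∀ u ∈ I, ∀ v ∈ I, ¬ G.Adj u v) ↔ G.IsIndepSet ↑I :=
    ⟨fun h u hu v hv _ => h u hu v hv, fun h u hu v hv =>
      (eq_or_ne u v).elim (fun huv => huv ▸ G.irrefl) (h hu hv)⟩
  refine IsGreatest.csSup_eq ⟨?_, ?_⟩
  · obtain ⟨I, hI, rfl⟩ := hex
    exact ⟨I, (hiff I).2 hI, rfl⟩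
  · rintro _ ⟨I, hI, rfl⟩
    exact hle I ((hiff I).1 hI)

theorem ZMod.val_add_natCast_eq_or {n c : ℕ} [NeZero n] (x : ZMod n) (hc : c < n) :
    (x + c).val = x.val + c ∨ (x + c).val + n = x.val + c := by
  have hcv : (c : ZMod n).val = c := ZMod.val_natCast_of_lt hc
  rcases lt_or_ge (x.val + c) n with h | h
  · left
    rw [ZMod.val_add_of_lt (by rwa [hcv]), hcv]
  · right
    have := ZMod.val_add_val_of_le (a := x) (b := c) (by rwa [hcv])
    rw [hcv] at this
    exact this.symm

theorem Nat.card_filter_range_mod_ne_zero (m : ℕ) {d : ℕ} (hd : 0 < d) :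
    #{i ∈ range m | i % d ≠ 0} = m - (m / d + if 0 < m % d then 1 else 0) := by
  have h0 : #{i ∈ range m | i % d = 0} = m / d + if 0 < m % d then 1 else 0 := by
    rw [← Nat.count_eq_card_filter_range]
    convert Nat.count_modEq_card m hd 0 using 3 <;> simp [Nat.ModEq]
  have := card_filter_add_card_filter_not (s := range m) (fun i => i % d = 0)
  rw [card_range] at this
  simp only [ne_eq]
  omega

theorem ZMod.card_filter_val {n : ℕ} [NeZero n] (p : ℕ → Prop) [DecidablePred p] :
    #{x : ZMod n | p x.val} = #{i ∈ range n | p i} := by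
  refine card_nbij' ZMod.val Nat.cast ?_ ?_ ?_ ?_
  · intro x hx
    simp only [coe_filter, mem_univ, true_and, Set.mem_ofPred_eq, mem_range] at hx ⊢
    exact ⟨ZMod.val_lt x, hx⟩
  · intro i hi
    simp only [coe_filter, mem_univ, true_and, Set.mem_ofPred_eq, mem_range] at hi ⊢
    rw [ZMod.val_natCast_of_lt hi.1]
    exact hi.2
  · intro x _
    exact ZMod.natCast_zmod_val x
  · intro i hi
    simp only [coe_filter, Set.mem_ofPred_eq, mem_range] at hi
    exact ZMod.val_natCast_of_lt hi.1

theorem exists_lt_five_not_and_not (a b : ℕ → Prop) (ha : ∀ j, ¬(a j ∧ a (j + 1)))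
    (hb : ∀ j, ¬(b j ∧ b (j + 2))) : ∃ j < 5, ¬a j ∧ ¬b j := by
  by_contra! h
  replace h : ∀ j < 5, a j ∨ b j := fun j hj => or_iff_not_imp_left.2 (h j hj)
  rcases h 0 (by norm_num) with a0 | b0
  · have b1 := (h 1 (by norm_num)).resolve_left fun a1 => ha 0 ⟨a0, a1⟩
    have a3 := (h 3 (by norm_num)).resolve_right fun b3 => hb 1 ⟨b1, b3⟩
    have b2 := (h 2 (by norm_num)).resolve_left fun a2 => ha 2 ⟨a2, a3⟩
    have b4 := (h 4 (by norm_num)).resolve_left fun a4 => ha 3 ⟨a3, a4⟩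
    exact hb 2 ⟨b2, b4⟩
  · have a2 := (h 2 (by norm_num)).resolve_right fun b2 => hb 0 ⟨b0, b2⟩
    have b1 := (h 1 (by norm_num)).resolve_left fun a1 => ha 1 ⟨a1, a2⟩
    have b3 := (h 3 (by norm_num)).resolve_left fun a3 => ha 2 ⟨a2, a3⟩
    exact hb 1 ⟨b1, b3⟩

theorem Finset.card_mul_card_le_of_forall_exists_add_notMem {G ι : Type*} [AddGroup G]
    [Fintype G] [DecidableEq G] (O : Finset G) (s : Finset ι) (g : ι → G)
    (h : ∀ x, ∃ j ∈ s, x + g j ∉ O) : #s * #O ≤ (#s - 1) * Fintype.card G := by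
  have htranslate (a : G) : #{x | x + a ∈ O} = #O := card_equiv (Equiv.addRight a) (by simp)
  have hmiss (x : G) : #{j ∈ s | x + g j ∈ O} ≤ #s - 1 :=
    Nat.le_sub_one_of_lt (card_lt_card (filter_ssubset.2 (h x)))
  calc #s * #O = ∑ j ∈ s, #{x | x + g j ∈ O} := by simp [htranslate]
    _ = ∑ x, #{j ∈ s | x + g j ∈ O} :=
      (sum_card_bipartiteAbove_eq_sum_card_bipartiteBelow (fun x j => x + g j ∈ O)).symm
    _ ≤ ∑ _x : G, (#s - 1) := sum_le_sum fun x _ => hmiss x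
    _ = (#s - 1) * Fintype.card G := by simp [mul_comm]

namespace GP

variable {n : ℕ}

theorem isIndepSet_iff {k : ZMod n} (h1 : (1 : ZMod n) ≠ 0) (hk : k ≠ 0)
    {s : Set (ZMod n ⊕ ZMod n)} :
    (GP n k).IsIndepSet s ↔ ∀ x, ¬(inl x ∈ s ∧ inr x ∈ s) ∧ ¬(inl x ∈ s ∧ inl (x + 1) ∈ s) ∧
      ¬(inr x ∈ s ∧ inr (x + k) ∈ s) := by
  constructor
  · intro hs x
    refine ⟨fun ⟨hu, hv⟩ => hs hu hv (by simp) ?_, fun ⟨hu, hv⟩ => hs hu hv (by simp [h1]) ?_,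
      fun ⟨hu, hv⟩ => hs hu hv (by simp [hk]) ?_⟩ <;> simp [GP, h1, hk]
  · rintro h u hu v hv - ⟨-, (⟨x, rfl, rfl⟩ | ⟨x, rfl, rfl⟩ | ⟨x, rfl, rfl⟩) |
      (⟨x, rfl, rfl⟩ | ⟨x, rfl, rfl⟩ | ⟨x, rfl, rfl⟩)⟩ <;> have := h x <;> tauto

theorem isIndepSet_two_iff (hn : 3 ≤ n) {s : Set (ZMod n ⊕ ZMod n)} :
    (GP n 2).IsIndepSet s ↔ ∀ x, ¬(inl x ∈ s ∧ inr x ∈ s) ∧ ¬(inl x ∈ s ∧ inl (x + 1) ∈ s) ∧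
      ¬(inr x ∈ s ∧ inr (x + 2) ∈ s) := by
  have hne {c : ℕ} (h0 : 0 < c) (hc : c < n) : (c : ZMod n) ≠ 0 := by
    rw [Ne, ZMod.natCast_eq_zero_iff]
    exact Nat.not_dvd_of_pos_of_lt h0 hc
  exact isIndepSet_iff (by exact_mod_cast hne one_pos (by omega))
    (by exact_mod_cast hne two_pos (by omega))

theorem exists_lt_five_add_notMem (hn : 3 ≤ n) {I : Finset (ZMod n ⊕ ZMod n)}
    (hI : (GP n 2).IsIndepSet ↑I) (x : ZMod n) :
    ∃ j ∈ range 5, x + (j : ZMod n) ∉ I.toLeft ∪ I.toRight := by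
  have hI := (isIndepSet_two_iff hn).1 hI
  obtain ⟨j, hj, ha, hb⟩ := exists_lt_five_not_and_not (fun j => inl (x + j) ∈ I)
    (fun j => inr (x + j) ∈ I) (fun j => by simpa [add_assoc] using (hI (x + j)).2.1)
    (fun j => by simpa [add_assoc] using (hI (x + j)).2.2)
  exact ⟨j, mem_range.2 hj, by simp [ha, hb]⟩

theorem card_le_of_isIndepSet_two (hn : 3 ≤ n) {I : Finset (ZMod n ⊕ ZMod n)}
    (hI : (GP n 2).IsIndepSet ↑I) : #I ≤ 4 * n / 5 := by
  have : NeZero n := ⟨by omega⟩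
  have hdisj : Disjoint I.toLeft I.toRight := disjoint_left.2 fun x hl hr =>
    ((isIndepSet_two_iff hn).1 hI x).1 ⟨mem_toLeft.1 hl, mem_toRight.1 hr⟩
  have hcount := card_mul_card_le_of_forall_exists_add_notMem (I.toLeft ∪ I.toRight) (range 5)
    Nat.cast (exists_lt_five_add_notMem hn hI)
  rw [card_range, ZMod.card] at hcount
  rw [← card_toLeft_add_card_toRight, ← card_union_of_disjoint hdisj,
    Nat.le_div_iff_mul_le (by norm_num)]
  omega

def indepSetModFive (n : ℕ) [NeZero n] : Finset (ZMod n ⊕ ZMod n) :=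
  ({x | x.val % 5 = 1 ∨ x.val % 5 = 4} : Finset (ZMod n)).disjSum
    {x | x.val % 5 = 2 ∨ x.val % 5 = 3}

theorem isIndepSet_indepSetModFive [NeZero n] (hn : 3 ≤ n) :
    (GP n 2).IsIndepSet ↑(indepSetModFive n) := by
  refine (isIndepSet_two_iff hn).2 fun x => ?_
  have h1 := ZMod.val_add_natCast_eq_or x (c := 1) (by omega)
  have h2 := ZMod.val_add_natCast_eq_or x (c := 2) (by omega)
  push_cast at h1 h2
  have := ZMod.val_lt x
  simp only [indepSetModFive, mem_coe, inl_mem_disjSum, inr_mem_disjSum, mem_filter, mem_univ,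
    true_and]
  omega

theorem card_indepSetModFive [NeZero n] : #(indepSetModFive n) = 4 * n / 5 := by
  calc #(indepSetModFive n) = #{x : ZMod n | x.val % 5 ≠ 0} := by
        rw [indepSetModFive, card_disjSum,
          ← card_union_of_disjoint (disjoint_filter.2 fun x _ h => by omega), ← filter_or]
        congr 1
        ext x
        simp only [mem_filter, mem_univ, true_and]
        omega
    _ = #{i ∈ range n | i % 5 ≠ 0} := ZMod.card_filter_val (fun i => i % 5 ≠ 0)
    _ = 4 * n / 5 := by
        rw [Nat.card_filter_range_mod_ne_zero n (by norm_num)]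
        split_ifs <;> omega

end GP

/-- For every `n ≥ 5`, the independence number of `GP(n,2)` equals `⌊4n/5⌋`. -/
theorem indepNum_GP_n_2 (n : ℕ) (hn : 5 ≤ n) :
    indepNum (GP n 2) = 4 * n / 5 := by
  have : NeZero n := ⟨by omega⟩
  exact indepNum_eq_of_isIndepSet (fun I hI => GP.card_le_of_isIndepSet_two (by omega) hI)
    ⟨GP.indepSetModFive n, GP.isIndepSet_indepSetModFive (by omega), GP.card_indepSetModFive⟩
end

section
/- For every n ≥ 5 and every i ∈ ℤ_n, any independent set of GP(n,2) contains at most 4 vertices among the 10 vertices of the 5 consecutive rungs R_i, R_{i+1}, R_{i+2}, R_{i+3}, R_{i+4}. -/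
/-- The `i`-th rung `R_i = {a_i, b_i}` of `GP(n,k)`. -/
def rung (n : ℕ) (i : ZMod n) : Finset (ZMod n ⊕ ZMod n) :=
  {Sum.inl i, Sum.inr i}

/-- `S_{i,ℓ}`: the union of the `ℓ` consecutive rungs `R_i, …, R_{i+ℓ-1}`. -/
def rungs (n : ℕ) (i : ZMod n) (l : ℕ) : Finset (ZMod n ⊕ ZMod n) :=
  (Finset.range l).biUnion fun t => rung n (i + (t : ZMod n))
/-!
The five rungs `R_i, …, R_{i+4}` carry a copy of the ladder with rails `a_0 ⋯ a_4` (a path) and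
`b_s ∼ b_{s+2}`, joined by the spokes `a_s b_s`; since `n ≥ 5` the copy is injective, so an
independent set of `GP(n,2)` pulls back to one of the ladder. An independent set of the ladder
with five vertices would meet every rung exactly once, avoiding consecutive `a`'s and `b`'s two
apart: if it picks `b_2` it picks `a_0, a_4`, hence `b_1, b_3`; otherwise it picks `a_2`, hence
`b_1, b_3` again — and `b_1 ∼ b_3`.
-/

open Finset Function

def SimpleGraph.Hom.ofFromRel {V W : Type*} {r : V → V → Prop} {r' : W → W → Prop} {f : V → W}
    (hf : Injective f) (h : ∀ u v, r u v → r' (f u) (f v)) :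
    SimpleGraph.fromRel r →g SimpleGraph.fromRel r' where
  toFun := f
  map_rel' := fun {u v} huv => by
    rw [SimpleGraph.fromRel_adj] at huv ⊢
    exact ⟨hf.ne huv.1, huv.2.imp (h u v) (h v u)⟩

theorem SimpleGraph.Hom.card_indep_inter_image_le {V W : Type*} [Fintype V] [DecidableEq W]
    {H : SimpleGraph V} {G : SimpleGraph W} (f : H →g G) (hf : Injective f) {m : ℕ}
    (hH : ∀ J : Finset V, (∀ u ∈ J, ∀ v ∈ J, ¬ H.Adj u v) → J.card ≤ m)
    {I : Finset W} (hI : ∀ u ∈ I, ∀ v ∈ I, ¬ G.Adj u v) :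
    (I ∩ univ.image f).card ≤ m := by
  have hsub : I ∩ univ.image f ⊆ (I.preimage f hf.injOn).image f := by
    intro x hx
    obtain ⟨hxI, hx⟩ := mem_inter.1 hx
    obtain ⟨u, -, rfl⟩ := mem_image.1 hx
    exact mem_image_of_mem f (mem_preimage.2 hxI)
  calc (I ∩ univ.image f).card ≤ (I.preimage f hf.injOn).card :=
        (card_le_card hsub).trans card_image_le
    _ ≤ m := hH _ fun u hu v hv huv => hI _ (mem_preimage.1 hu) _ (mem_preimage.1 hv) (f.map_adj huv)

def gpLadder (l k : ℕ) : SimpleGraph (Fin l ⊕ Fin l) :=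
  SimpleGraph.fromRel fun u v =>
    (∃ s, u = .inl s ∧ v = .inr s) ∨
    (∃ s t : Fin l, u = .inl s ∧ v = .inl t ∧ t.val = s.val + 1) ∨
    (∃ s t : Fin l, u = .inr s ∧ v = .inr t ∧ t.val = s.val + k)

instance (l k : ℕ) : DecidableRel (gpLadder l k).Adj := fun u v => by
  unfold gpLadder; infer_instance

theorem gpLadder_five_two_indep_card_le_four (J : Finset (Fin 5 ⊕ Fin 5))
    (hJ : ∀ u ∈ J, ∀ v ∈ J, ¬ (gpLadder 5 2).Adj u v) : J.card ≤ 4 := by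
  revert J; decide +kernel

def ladderMap (n : ℕ) (i : ZMod n) (l : ℕ) : Fin l ⊕ Fin l → ZMod n ⊕ ZMod n :=
  Sum.map (fun t => i + t.val) (fun t => i + t.val)

theorem ladderMap_injective {n l : ℕ} (hl : l ≤ n) (i : ZMod n) :
    Injective (ladderMap n i l) := by
  have hcast : Injective fun t : Fin l => i + (t.val : ZMod n) := fun s t hst => by
    have := congrArg ZMod.val (add_left_cancel hst)
    rw [ZMod.val_natCast_of_lt (by omega), ZMod.val_natCast_of_lt (by omega)] at this
    exact Fin.ext this
  exact Sum.map_injective.2 ⟨hcast, hcast⟩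

theorem rungs_eq_image_ladderMap (n : ℕ) (i : ZMod n) (l : ℕ) :
    rungs n i l = univ.image (ladderMap n i l) := by
  ext x
  simp only [rungs, rung, ladderMap, mem_biUnion, mem_range, mem_insert, mem_singleton, mem_image,
    mem_univ, true_and, Sum.exists, Sum.map_inl, Sum.map_inr, Fin.exists_iff]
  grind

def gpLadderHom {n l : ℕ} (hl : l ≤ n) (i : ZMod n) (k : ℕ) :
    gpLadder l k →g GP n k :=
  .ofFromRel (ladderMap_injective hl i) <| by
    rintro _ _ (⟨s, rfl, rfl⟩ | ⟨s, t, rfl, rfl, hst⟩ | ⟨s, t, rfl, rfl, hst⟩)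
    · exact .inl ⟨_, rfl, rfl⟩
    · exact .inr <| .inl ⟨_, rfl, by simp [ladderMap, hst, add_assoc]⟩
    · exact .inr <| .inr ⟨_, rfl, by simp [ladderMap, hst, add_assoc]⟩

/-- For `n ≥ 5` and any `i ∈ ℤ_n`, every independent set of `GP(n,2)` contains at most
`4` vertices among the `5` consecutive rungs `R_i, …, R_{i+4}`. -/
theorem indep_inter_five_rungs_le_four (n : ℕ) (hn : 5 ≤ n) (i : ZMod n)
    (I : Finset (ZMod n ⊕ ZMod n))
    (hI : ∀ u ∈ I, ∀ v ∈ I, ¬ (GP n 2).Adj u v) :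
    (I ∩ rungs n i 5).card ≤ 4 := by
  rw [rungs_eq_image_ladderMap]
  refine (gpLadderHom hn i 2).card_indep_inter_image_le (ladderMap_injective hn i)
    gpLadder_five_two_indep_card_le_four ?_
  simpa using hI
end

section
/- If k and n are coprime, then GP(n,k) is isomorphic to the cycle permutation graph CyP(n, α) where α is the permutation of ℤ_n given by α(x) = kx. -/
/-- The permutation graph `P(G, α)`: two disjoint copies of `G` (on `false × V` and
`true × V`), with each vertex `(false, v)` joined to `(true, α v)`. -/
def PermGraph {V : Type*} (G : SimpleGraph V) (α : Equiv.Perm V) :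
    SimpleGraph (Bool × V) :=
  SimpleGraph.fromRel fun p q =>
    (p.1 = q.1 ∧ G.Adj p.2 q.2) ∨ (p.1 = false ∧ q.1 = true ∧ q.2 = α p.2)

/-- The cycle on vertex set `ℤ_n` with `i` adjacent to `i + 1`. -/
def cycGraph (n : ℕ) : SimpleGraph (ZMod n) :=
  SimpleGraph.fromRel fun i j => j = i + 1

/-!
Send the outer rim vertex `a_i` to `(true, i)` and the spoke end `b_i` to `(false, k⁻¹ i)`.
Multiplication by the unit `k⁻¹` turns the inner edges `b_i b_{i+k}` into the cycle edges
`k⁻¹ i ~ k⁻¹ i + 1`, and the spoke `a_i b_i` into the matching edge from `k⁻¹ i` to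
`α (k⁻¹ i) = i`.
-/

open SimpleGraph Sum

section PermGraph

variable {V : Type*} {G : SimpleGraph V} {α : Equiv.Perm V}

theorem PermGraph_adj_same (b : Bool) (v w : V) :
    (PermGraph G α).Adj (b, v) (b, w) ↔ G.Adj v w := by
  simp only [PermGraph, fromRel_adj, ne_eq, Prod.mk.injEq, true_and]
  grind [SimpleGraph.Adj.ne, SimpleGraph.adj_comm]

theorem PermGraph_adj_false_true (v w : V) :
    (PermGraph G α).Adj (false, v) (true, w) ↔ w = α v := by
  simp [PermGraph]

theorem PermGraph_adj_true_false (v w : V) :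
    (PermGraph G α).Adj (true, v) (false, w) ↔ v = α w := by
  rw [adj_comm, PermGraph_adj_false_true]

end PermGraph

section GP

variable {n : ℕ}

section Adj

variable {k : ZMod n} {i j : ZMod n}

theorem GP_adj_inl_inl : (GP n k).Adj (inl i) (inl j) ↔ (cycGraph n).Adj i j := by
  simp [GP, cycGraph]

theorem GP_adj_inr_inr : (GP n k).Adj (inr i) (inr j) ↔ i ≠ j ∧ (j = i + k ∨ i = j + k) := by
  simp [GP]

theorem GP_adj_inl_inr : (GP n k).Adj (inl i) (inr j) ↔ i = j := by
  simp [GP, eq_comm]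

theorem GP_adj_inr_inl : (GP n k).Adj (inr i) (inl j) ↔ i = j := by
  rw [adj_comm, GP_adj_inl_inr, eq_comm]

end Adj

theorem cycGraph_adj_unit_inv_mul (u : (ZMod n)ˣ) (i j : ZMod n) :
    (cycGraph n).Adj (↑u⁻¹ * i) (↑u⁻¹ * j) ↔ i ≠ j ∧ (j = i + u ∨ i = j + u) := by
  have step (x y : ZMod n) : ↑u⁻¹ * y = ↑u⁻¹ * x + 1 ↔ y = x + u := by
    rw [← Units.inv_mul u, ← mul_add, Units.mul_right_inj]
  simp only [cycGraph, fromRel_adj, ne_eq, Units.mul_right_inj, step]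

def GP.equivBoolProd (u : (ZMod n)ˣ) : ZMod n ⊕ ZMod n ≃ Bool × ZMod n :=
  (Equiv.sumComm _ _).trans
    ((Equiv.sumCongr (Units.mulLeft u⁻¹) (Equiv.refl _)).trans (Equiv.boolProdEquivSum _).symm)

@[simp]
theorem GP.equivBoolProd_inl (u : (ZMod n)ˣ) (i : ZMod n) :
    GP.equivBoolProd u (inl i) = (true, i) :=
  rfl

@[simp]
theorem GP.equivBoolProd_inr (u : (ZMod n)ˣ) (i : ZMod n) :
    GP.equivBoolProd u (inr i) = (false, ↑u⁻¹ * i) :=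
  rfl

def GP.isoPermGraphCycGraph (u : (ZMod n)ˣ) :
    GP n u ≃g PermGraph (cycGraph n) (Units.mulLeft u) where
  toEquiv := GP.equivBoolProd u
  map_rel_iff' {x y} := by
    rcases x with i | i <;> rcases y with j | j <;>
      simp only [GP.equivBoolProd_inl, GP.equivBoolProd_inr]
    · rw [PermGraph_adj_same, GP_adj_inl_inl]
    · simp only [PermGraph_adj_true_false, GP_adj_inl_inr, Units.mulLeft_apply,
        Units.mul_inv_cancel_left]
    · simp only [PermGraph_adj_false_true, GP_adj_inr_inl, Units.mulLeft_apply,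
        Units.mul_inv_cancel_left, eq_comm]
    · rw [PermGraph_adj_same, cycGraph_adj_unit_inv_mul, GP_adj_inr_inr]

end GP

theorem GP_iso_cyclePermGraph_general (n : ℕ) (k : ℕ) (hcop : Nat.Coprime k n)
    (α : Equiv.Perm (ZMod n)) (hα : ∀ x : ZMod n, α x = (k : ZMod n) * x) :
    Nonempty (GP n (k : ZMod n) ≃g PermGraph (cycGraph n) α) := by
  obtain rfl : α = Units.mulLeft (ZMod.unitOfCoprime k hcop) := Equiv.ext hα
  exact ⟨GP.isoPermGraphCycGraph (ZMod.unitOfCoprime k hcop)⟩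

/-- If `k` and `n` are coprime, then `GP(n,k)` is isomorphic to the cycle permutation
graph `CyP(n, α)` with `α(x) = kx`. -/
theorem GP_iso_cyclePermGraph (n : ℕ) (hn : 3 ≤ n) (k : ℕ) (hcop : Nat.Coprime k n)
    (α : Equiv.Perm (ZMod n)) (hα : ∀ x : ZMod n, α x = (k : ZMod n) * x) :
    Nonempty (GP n (k : ZMod n) ≃g PermGraph (cycGraph n) α) :=
  GP_iso_cyclePermGraph_general n k hcop α hα
end
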